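/- Let A be a real symmetric positive semidefinite d×d matrix with eigenvalues λ₁ ≥ ⋯ ≥ λ_d ≥ 0 and rank(A) ≤ m, and let λ > 0. Then ‖(A − λI_d)⁺₍ₘ₎ − A‖_F² = Σ_{i=1}^{d} min(λ_i, λ)². -/

import Mathlib

open Matrix

/-- Frobenius norm of a real matrix. -/
noncomputable def frobNorm {n m : ℕ} (M : Matrix (Fin n) (Fin m) ℝ) : ℝ :=
  Real.sqrt (∑ i, ∑ j, (M i j) ^ 2)

/-!
Conjugation by the orthogonal `U` preserves both the rank and the Frobenius norm, so everything
reduces to the diagonal `diag((λᵢ - λ)⁺ 1[i < m] - λᵢ)`. For `i < m` its entry is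
`max(λᵢ - λ, 0) - λᵢ = -min(λᵢ, λ)`; for `i ≥ m` the rank bound together with `λ` being
nonincreasing and nonnegative forces `λᵢ = 0 = min(λᵢ, λ)`.
-/

lemma frobNorm_sq {n m : ℕ} (M : Matrix (Fin n) (Fin m) ℝ) : frobNorm M ^ 2 = (Mᵀ * M).trace := by
  rw [frobNorm, Real.sq_sqrt (by positivity), trace, Finset.sum_comm]
  simp only [diag, mul_apply, transpose_apply, sq]

lemma frobNorm_conj_diagonal_sq {d : ℕ} {U : Matrix (Fin d) (Fin d) ℝ} (hU : Uᵀ * U = 1)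
    (δ : Fin d → ℝ) : frobNorm (U * diagonal δ * Uᵀ) ^ 2 = ∑ i, δ i ^ 2 := by
  have hsquare : (U * diagonal δ * Uᵀ)ᵀ * (U * diagonal δ * Uᵀ)
      = U * diagonal (fun i => δ i ^ 2) * Uᵀ := by
    simp only [transpose_mul, transpose_transpose, diagonal_transpose, Matrix.mul_assoc]
    rw [← Matrix.mul_assoc Uᵀ U, hU, Matrix.one_mul, ← Matrix.mul_assoc (diagonal δ),
      diagonal_mul_diagonal]
    simp only [sq]
  rw [frobNorm_sq, hsquare, trace_mul_cycle, hU, Matrix.one_mul, trace_diagonal]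

lemma rank_conj_of_transpose_mul_self_eq_one {n R : Type*} [Fintype n] [DecidableEq n]
    [CommRing R] {U : Matrix n n R} (hU : Uᵀ * U = 1) (M : Matrix n n R) :
    (U * M * Uᵀ).rank = M.rank := by
  have hUdet : IsUnit U.det := isUnit_det_of_left_inverse hU
  rw [rank_mul_eq_left_of_isUnit_det _ _ (by rwa [det_transpose]),
    rank_mul_eq_right_of_isUnit_det _ _ hUdet]

lemma Antitone.eq_zero_of_card_ne_zero_le {α : Type*} [Zero α] [PartialOrder α] [DecidableEq α] {d m : ℕ}
    {f : Fin d → α} (hf : Antitone f) (hf0 : ∀ i, 0 ≤ f i)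
    (hcard : Fintype.card {i // f i ≠ 0} ≤ m) {i : Fin d} (hi : m ≤ i) : f i = 0 := by
  by_contra hne
  have hpos : 0 < f i := (hf0 i).lt_of_ne' hne
  have hIic : Finset.Iic i ⊆ Finset.univ.filter (fun j => f j ≠ 0) := fun j hj =>
    Finset.mem_filter.mpr ⟨Finset.mem_univ j, (hpos.trans_le (hf (Finset.mem_Iic.mp hj))).ne'⟩
  have := Finset.card_le_card hIic
  rw [Fin.card_Iic, ← Fintype.card_subtype] at this
  omega

lemma max_sub_zero_sub_self {α : Type*} [AddCommGroup α] [LinearOrder α] [IsOrderedAddMonoid α]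
    (x c : α) : max (x - c) 0 - x = -min x c := by
  rcases le_total x c with h | h
  · rw [max_eq_right (sub_nonpos.mpr h), min_eq_left h, zero_sub]
  · rw [max_eq_left (sub_nonneg.mpr h), min_eq_right h, sub_sub_cancel_left]

theorem shrinkage_mse_psd_teacher_general
    (d m : ℕ) (A : Matrix (Fin d) (Fin d) ℝ)
    (U : Matrix (Fin d) (Fin d) ℝ) (lam : Fin d → ℝ)
    (hU : Uᵀ * U = 1) (hlam : Antitone lam) (hlam0 : ∀ i, 0 ≤ lam i)
    (hAdec : A = U * Matrix.diagonal lam * Uᵀ)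
    (hrank : A.rank ≤ m)
    (l : ℝ) (hl : 0 < l)
    (B : Matrix (Fin d) (Fin d) ℝ)
    (hB : B = U * Matrix.diagonal
      (fun i : Fin d => if (i : ℕ) < m then max (lam i - l) 0 else 0) * Uᵀ) :
    frobNorm (B - A) ^ 2 = ∑ i, min (lam i) l ^ 2 := by
  have htail : ∀ i : Fin d, m ≤ (i : ℕ) → lam i = 0 := by
    rw [hAdec, rank_conj_of_transpose_mul_self_eq_one hU, rank_diagonal] at hrank
    exact fun i hi => hlam.eq_zero_of_card_ne_zero_le hlam0 hrank hi
  rw [hB, hAdec, ← Matrix.sub_mul, ← Matrix.mul_sub, diagonal_sub, frobNorm_conj_diagonal_sq hU]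
  refine Finset.sum_congr rfl fun i _ => ?_
  split_ifs with him
  · rw [max_sub_zero_sub_self, neg_sq]
  · simp [htail i (not_lt.mp him), hl.le]

/-- **Population MSE of the regularized estimator.** Let `A` be a real symmetric PSD
`d × d` matrix with spectral decomposition `A = U * diagonal lam * Uᵀ` (`U` orthogonal,
`lam` nonincreasing and nonnegative), `rank A ≤ m ≤ d`, and `l > 0`. Then
`‖(A - l I)⁺₍ₘ₎ - A‖_F² = Σᵢ min(lam i, l)²`, where `(A - l I)⁺₍ₘ₎ =
U * diagonal ((lam₁ - l)⁺, …, (lam_m - l)⁺, 0, …, 0) * Uᵀ`. -/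
theorem shrinkage_mse_psd_teacher
    (d m : ℕ) (hm : m ≤ d) (A : Matrix (Fin d) (Fin d) ℝ)
    (hA : A.IsSymm) (hApsd : A.PosSemidef)
    (U : Matrix (Fin d) (Fin d) ℝ) (lam : Fin d → ℝ)
    (hU : Uᵀ * U = 1) (hlam : Antitone lam) (hlam0 : ∀ i, 0 ≤ lam i)
    (hAdec : A = U * Matrix.diagonal lam * Uᵀ)
    (hrank : A.rank ≤ m)
    (l : ℝ) (hl : 0 < l)
    (B : Matrix (Fin d) (Fin d) ℝ)
    (hB : B = U * Matrix.diagonal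
      (fun i : Fin d => if (i : ℕ) < m then max (lam i - l) 0 else 0) * Uᵀ) :
    frobNorm (B - A) ^ 2 = ∑ i, min (lam i) l ^ 2 :=
  shrinkage_mse_psd_teacher_general d m A U lam hU hlam hlam0 hAdec hrank l hl B hB
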